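/- Let q be an odd prime power, d ≥ 2, and E ⊆ F_q^d with |E| ≥ q. Then for any real a > 1, there exists Y ⊆ F_q^d with |Y| ≥ ((a-1)/a) q^d such that for every y ∈ Y, the distance set Δ(E ∪ {y}) = {||u - v|| : u, v ∈ E ∪ {y}} satisfies |Δ(E ∪ {y})| ≥ q/(2a). -/

import Mathlib

/-!
For `y ∈ F_q^d` let `ν(y)` be the number of pairs `(x, x') ∈ E × E` with `‖x - y‖ = ‖x' - y‖`.
Grouping `E` by the value of `‖x - y‖`, Cauchy–Schwarz gives `|E|² ≤ |Δ_y(E)| · ν(y)`.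
In odd characteristic the points equidistant from two distinct points form an affine hyperplane,
of size `q^(d-1)`, so `∑_y ν(y) = |E| q^d + (|E|² - |E|) q^(d-1) ≤ 2 |E|² q^(d-1)` once `|E| ≥ q`.
By Markov's inequality `ν(y) ≤ 2a |E|² / q`, and hence `|Δ_y(E)| ≥ q / (2a)`, for all but
`q^d / a` points `y`.
-/

open Finset Matrix

theorem AddMonoidHom.card_fiber_mul_card_eq_card {G M : Type*} [AddGroup G] [Fintype G]
    [AddMonoid M] [Fintype M] [DecidableEq M] (f : G →+ M) (hf : Function.Surjective f) (x : M) :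
    #{g | f g = x} * Fintype.card M = Fintype.card G :=
  calc #{g | f g = x} * Fintype.card M = ∑ y : M, #{g | f g = y} := by
        rw [sum_congr rfl fun y _ => AddMonoidHom.card_fiber_eq_of_mem_range f (hf y) (hf x),
          sum_const, card_univ, smul_eq_mul, mul_comm]
    _ = Fintype.card G := (card_eq_sum_card_fiberwise fun g _ => mem_univ (f g)).symm

theorem sq_card_le_card_image_mul_card_filter_eq {α β : Type*} [DecidableEq β]
    (s : Finset α) (f : α → β) :
    #s ^ 2 ≤ #(s.image f) * #{p ∈ s ×ˢ s | f p.1 = f p.2} := by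
  have hpairs : #{p ∈ s ×ˢ s | f p.1 = f p.2} = ∑ t ∈ s.image f, #{a ∈ s | f a = t} ^ 2 := by
    rw [card_eq_sum_card_fiberwise (f := fun p => f p.1) fun p hp =>
      mem_image_of_mem f (mem_product.mp (mem_filter.mp hp).1).1]
    refine sum_congr rfl fun t _ => ?_
    rw [sq, ← card_product]
    congr 1
    ext ⟨a, b⟩
    simp only [mem_filter, mem_product]
    grind
  rw [hpairs, card_eq_sum_card_image f s]
  exact sq_sum_le_card_mul_sum_sq

theorem card_sub_sum_div_le_card_filter_le {α : Type*} [Fintype α] (g : α → ℝ)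
    (hg : ∀ x, 0 ≤ g x) {t : ℝ} (ht : 0 < t) :
    (Fintype.card α : ℝ) - (∑ x, g x) / t ≤ #{x | g x ≤ t} := by
  have hlarge : (#{x | ¬ g x ≤ t} : ℝ) * t ≤ ∑ x, g x :=
    calc (#{x | ¬ g x ≤ t} : ℝ) * t ≤ ∑ x ∈ {x | ¬ g x ≤ t}, g x := by
          rw [← nsmul_eq_mul]
          exact card_nsmul_le_sum _ _ _ fun x hx => (not_le.mp (mem_filter.mp hx).2).le
      _ ≤ ∑ x, g x := sum_le_sum_of_subset_of_nonneg (subset_univ _) fun x _ _ => hg x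
  have hsplit : (#{x | g x ≤ t} : ℝ) + #{x | ¬ g x ≤ t} = Fintype.card α := by
    exact_mod_cast card_filter_add_card_filter_not (s := univ) (fun x => g x ≤ t)
  rw [sub_le_iff_le_add, ← hsplit, add_le_add_iff_left, le_div_iff₀ ht]
  exact hlarge

section SqDist

variable {ι R : Type*} [Fintype ι] [CommRing R]

def sqDist (x y : ι → R) : R := ∑ i, (x i - y i) ^ 2

theorem sqDist_eq_sqDist_iff (x x' y : ι → R) :
    sqDist x y = sqDist x' y ↔ ((2 : R) • (x' - x)) ⬝ᵥ y = x' ⬝ᵥ x' - x ⬝ᵥ x := by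
  have hdiff : sqDist x y - sqDist x' y = x ⬝ᵥ x - x' ⬝ᵥ x' + ((2 : R) • (x' - x)) ⬝ᵥ y := by
    simp only [sqDist, dotProduct, ← sum_sub_distrib, ← sum_add_distrib]
    refine sum_congr rfl fun i _ => ?_
    simp only [Pi.smul_apply, Pi.sub_apply, smul_eq_mul]
    ring
  rw [← sub_eq_zero, hdiff]
  constructor <;> intro h <;> linear_combination h

variable [DecidableEq R]

def equidistantPairs (E : Finset (ι → R)) (y : ι → R) : Finset ((ι → R) × (ι → R)) :=
  {p ∈ E ×ˢ E | sqDist p.1 y = sqDist p.2 y}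

theorem le_card_image_sqDist_of_card_equidistantPairs_le {E : Finset (ι → R)}
    (hE : E.Nonempty) {y : ι → R} {c : ℝ} (hc : 0 < c)
    (hpairs : (#(equidistantPairs E y) : ℝ) ≤ #E ^ 2 / c) :
    c ≤ #(E.image (sqDist · y)) := by
  have hcs : (#E : ℝ) ^ 2 ≤ #(E.image (sqDist · y)) * #(equidistantPairs E y) := by
    exact_mod_cast sq_card_le_card_image_mul_card_filter_eq E (sqDist · y)
  have hE2 : 0 < (#E : ℝ) ^ 2 := by positivity
  rw [le_div_iff₀ hc] at hpairs
  nlinarith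

end SqDist

section FiniteField

variable {F ι : Type*} [Field F] [Fintype F] [DecidableEq F] [Fintype ι] [DecidableEq ι]

theorem card_dotProduct_eq_mul_card {c : ι → F} (hc : c ≠ 0) (b : F) :
    #{y : ι → F | c ⬝ᵥ y = b} * Fintype.card F = Fintype.card F ^ Fintype.card ι := by
  obtain ⟨i, hi⟩ := Function.ne_iff.mp hc
  have hsurj : Function.Surjective (AddMonoidHom.mk' (c ⬝ᵥ ·) (dotProduct_add c)) := fun b =>
    ⟨Pi.single i (b / c i), by simp [dotProduct_single, mul_div_cancel₀ _ hi]⟩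
  rw [← Fintype.card_fun]
  exact AddMonoidHom.card_fiber_mul_card_eq_card _ hsurj b

theorem card_sqDist_eq_sqDist_mul_card (h2 : (2 : F) ≠ 0) {x x' : ι → F} (hxx' : x ≠ x') :
    #{y | sqDist x y = sqDist x' y} * Fintype.card F = Fintype.card F ^ Fintype.card ι := by
  simp_rw [sqDist_eq_sqDist_iff]
  exact card_dotProduct_eq_mul_card (smul_ne_zero h2 (sub_ne_zero.mpr hxx'.symm)) _

theorem card_mul_sum_card_equidistantPairs_le (h2 : (2 : F) ≠ 0) {E : Finset (ι → F)}
    (hE : Fintype.card F ≤ #E) :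
    Fintype.card F * ∑ y, #(equidistantPairs E y) ≤
      2 * #E ^ 2 * Fintype.card F ^ Fintype.card ι := by
  set q := Fintype.card F
  set N : (ι → F) × (ι → F) → ℕ := fun p => #{y | sqDist p.1 y = sqDist p.2 y}
  have hswap : ∑ y, #(equidistantPairs E y) = ∑ p ∈ E.diag, N p + ∑ p ∈ E.offDiag, N p := by
    simp only [equidistantPairs, card_filter, N]
    rw [sum_comm, ← sum_union E.disjoint_diag_offDiag, diag_union_offDiag]
  have hdiag : ∑ p ∈ E.diag, N p = #E * q ^ Fintype.card ι := by
    rw [sum_const_nat fun p hp => ?_, diag_card]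
    simp only [N, (mem_diag.mp hp).2, filter_true, card_univ, Fintype.card_fun, q]
  have hoffDiag : q * ∑ p ∈ E.offDiag, N p ≤ #E ^ 2 * q ^ Fintype.card ι := by
    rw [mul_sum, sum_const_nat fun p hp => ?_]
    · gcongr
      rw [offDiag_card, sq]
      exact Nat.sub_le _ _
    · rw [mul_comm]
      exact card_sqDist_eq_sqDist_mul_card h2 (mem_offDiag.mp hp).2.2
  have hdiag_le : q * (#E * q ^ Fintype.card ι) ≤ #E ^ 2 * q ^ Fintype.card ι :=
    calc q * (#E * q ^ Fintype.card ι) ≤ #E * (#E * q ^ Fintype.card ι) := by gcongr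
      _ = #E ^ 2 * q ^ Fintype.card ι := by ring
  rw [hswap, mul_add, hdiag]
  linarith

theorem le_card_filter_card_equidistantPairs_le (h2 : (2 : F) ≠ 0) {E : Finset (ι → F)}
    (hE : Fintype.card F ≤ #E) {a : ℝ} (ha : 0 < a) :
    (a - 1) / a * Fintype.card F ^ Fintype.card ι ≤
      #{y | (#(equidistantPairs E y) : ℝ) ≤ #E ^ 2 / (Fintype.card F / (2 * a))} := by
  have hq : (0 : ℝ) < Fintype.card F := by exact_mod_cast Fintype.card_pos
  have hE0 : (0 : ℝ) < #E := by exact_mod_cast Fintype.card_pos.trans_le hE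
  have hsum : ∑ y, (#(equidistantPairs E y) : ℝ) ≤
      2 * #E ^ 2 * Fintype.card F ^ Fintype.card ι / Fintype.card F := by
    rw [le_div_iff₀ hq, mul_comm]
    exact_mod_cast card_mul_sum_card_equidistantPairs_le h2 hE
  have hmarkov := card_sub_sum_div_le_card_filter_le (fun y => (#(equidistantPairs E y) : ℝ))
    (fun _ => Nat.cast_nonneg _) (by positivity : (0 : ℝ) < #E ^ 2 / (Fintype.card F / (2 * a)))
  rw [Fintype.card_fun, Nat.cast_pow] at hmarkov
  calc (a - 1) / a * Fintype.card F ^ Fintype.card ι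
      = Fintype.card F ^ Fintype.card ι - 2 * #E ^ 2 * Fintype.card F ^ Fintype.card ι /
          Fintype.card F / (#E ^ 2 / (Fintype.card F / (2 * a))) := by
        field_simp
    _ ≤ _ := by gcongr
    _ ≤ _ := hmarkov

end FiniteField

theorem distance_set_union_pin_general (q d : ℕ) (F : Type*) [Field F] [Fintype F] [DecidableEq F]
    (hq : Fintype.card F = q) (hodd : Odd q)
    (E : Finset (Fin d → F)) (hE : q ≤ E.card) (a : ℝ) (ha : 1 < a) :
    ∃ Y : Finset (Fin d → F), ((Y.card : ℝ) ≥ (a - 1) / a * q ^ d) ∧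
      ∀ y ∈ Y,
        ((((insert y E) ×ˢ (insert y E)).image
          (fun p => ∑ i, (p.1 i - p.2 i) ^ 2)).card : ℝ) ≥ (q : ℝ) / (2 * a) := by
  subst hq
  have h2 : (2 : F) ≠ 0 := Ring.two_ne_zero fun h => by
    have := FiniteField.even_card_iff_char_two.mp h
    rw [Nat.odd_iff] at hodd
    omega
  have ha0 : 0 < a := zero_lt_one.trans ha
  have hE0 : E.Nonempty := card_pos.mp (Fintype.card_pos.trans_le hE)
  refine ⟨({y | (#(equidistantPairs E y) : ℝ) ≤ #E ^ 2 / (Fintype.card F / (2 * a))} : Finset _),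
    ?_, fun y hy => ?_⟩
  · simpa only [Fintype.card_fin] using
      le_card_filter_card_equidistantPairs_le h2 hE ha0
  · have hpinned := le_card_image_sqDist_of_card_equidistantPairs_le hE0 (by positivity)
      (mem_filter.mp hy).2
    refine hpinned.trans (Nat.cast_le.mpr (card_le_card fun t ht => ?_))
    obtain ⟨x, hx, rfl⟩ := mem_image.mp ht
    exact mem_image_of_mem _ (mk_mem_product (mem_insert_of_mem hx) (mem_insert_self y E))

theorem distance_set_union_pin (q d : ℕ) (F : Type*) [Field F] [Fintype F] [DecidableEq F]
    (hq : Fintype.card F = q) (hodd : Odd q) (hd : 2 ≤ d)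
    (E : Finset (Fin d → F)) (hE : q ≤ E.card) (a : ℝ) (ha : 1 < a) :
    ∃ Y : Finset (Fin d → F), ((Y.card : ℝ) ≥ (a - 1) / a * q ^ d) ∧
      ∀ y ∈ Y,
        ((((insert y E) ×ˢ (insert y E)).image
          (fun p => ∑ i, (p.1 i - p.2 i) ^ 2)).card : ℝ) ≥ (q : ℝ) / (2 * a) :=
  distance_set_union_pin_general q d F hq hodd E hE a ha
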